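/- Let G be a countable group and let S be the subspace { 0 } ∪ { 1/n : n ∈ ℕ, n ≥ 1 } of ℝ with base point 0. Then G admits a group homomorphism with nontrivial image into Homeo₊(ℝ) if and only if G admits a group homomorphism with nontrivial image into the group Homeo̰₊^{(S,0)}(ℝ, 0). -/

import Mathlib

open Filter Topology Set

def HomeoPlusReal : Subgroup (Equiv.Perm ℝ) where
  carrier := {f | Continuous f ∧ Continuous f.symm ∧ StrictMono f}
  one_mem' := by
    refine ⟨continuous_id, ?_, fun a b h => h⟩
    exact continuous_id
  mul_mem' := by
    rintro a b ⟨ha1, ha2, ha3⟩ ⟨hb1, hb2, hb3⟩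
    refine ⟨?_, ?_, ?_⟩
    · simpa [Equiv.Perm.coe_mul] using ha1.comp hb1
    · have : Continuous (⇑b.symm ∘ ⇑a.symm) := hb2.comp ha2
      simpa [Equiv.Perm.mul_def, Equiv.symm_trans_apply, Function.comp] using this
    · intro x y h
      simpa [Equiv.Perm.coe_mul] using ha3 (hb3 h)
  inv_mem' := by
    rintro a ⟨ha1, ha2, ha3⟩
    refine ⟨by simpa [Equiv.Perm.inv_def] using ha2, by simpa [Equiv.Perm.inv_def] using ha1, ?_⟩
    intro x y h
    have h2 := ha3.lt_iff_lt (a := a.symm x) (b := a.symm y)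
    simp only [Equiv.apply_symm_apply] at h2
    simpa using h2.mp h

variable (S : Type*) [TopologicalSpace S] (s₀ : S)

/-- Data representing a local homeomorphism `F` of an open neighborhood of
`(0, s₀)` in `ℝ × S` of the form `F (x, s) = (h_s x, s)`, where each `h_s` is a
local orientation-preserving (strictly increasing) homeomorphism of `ℝ`, with
`F (0, s₀) = (0, s₀)`, together with a local inverse `G`. -/
structure ParamLocalHomeo where
  F : ℝ × S → ℝ × S
  G : ℝ × S → ℝ × S
  U : Set (ℝ × S)
  V : Set (ℝ × S)
  isOpen_U : IsOpen U
  isOpen_V : IsOpen V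
  mem_U : ((0 : ℝ), s₀) ∈ U
  mem_V : ((0 : ℝ), s₀) ∈ V
  contF : ContinuousOn F U
  contG : ContinuousOn G V
  mapsF : Set.MapsTo F U V
  mapsG : Set.MapsTo G V U
  leftInv : ∀ p ∈ U, G (F p) = p
  rightInv : ∀ p ∈ V, F (G p) = p
  snd_eq : ∀ p ∈ U, (F p).2 = p.2
  mono : ∀ p ∈ U, ∀ q ∈ U, p.2 = q.2 → p.1 < q.1 → (F p).1 < (F q).1
  fixes : F ((0 : ℝ), s₀) = ((0 : ℝ), s₀)

namespace ParamLocalHomeo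

variable {S s₀}

instance setoid : Setoid (ParamLocalHomeo S s₀) where
  r d e := d.F =ᶠ[nhds ((0 : ℝ), s₀)] e.F
  iseqv := ⟨fun _ => Filter.EventuallyEq.refl _ _,
    fun h => h.symm, fun h h' => h.trans h'⟩

lemma G_fixes (d : ParamLocalHomeo S s₀) : d.G ((0 : ℝ), s₀) = ((0 : ℝ), s₀) := by
  have h := d.leftInv _ d.mem_U
  rw [d.fixes] at h
  exact h

lemma G_snd_eq (d : ParamLocalHomeo S s₀) : ∀ p ∈ d.V, (d.G p).2 = p.2 := by
  intro p hp
  have h := d.snd_eq (d.G p) (d.mapsG hp)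
  rw [d.rightInv p hp] at h
  exact h.symm

def one : ParamLocalHomeo S s₀ where
  F := id
  G := id
  U := Set.univ
  V := Set.univ
  isOpen_U := isOpen_univ
  isOpen_V := isOpen_univ
  mem_U := trivial
  mem_V := trivial
  contF := continuousOn_id
  contG := continuousOn_id
  mapsF := fun _ _ => trivial
  mapsG := fun _ _ => trivial
  leftInv := fun _ _ => rfl
  rightInv := fun _ _ => rfl
  snd_eq := fun _ _ => rfl
  mono := fun _ _ _ _ _ h => h
  fixes := rfl

def comp (d e : ParamLocalHomeo S s₀) : ParamLocalHomeo S s₀ where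
  F := d.F ∘ e.F
  G := e.G ∘ d.G
  U := e.U ∩ e.F ⁻¹' d.U
  V := d.V ∩ d.G ⁻¹' e.V
  isOpen_U := e.contF.isOpen_inter_preimage e.isOpen_U d.isOpen_U
  isOpen_V := d.contG.isOpen_inter_preimage d.isOpen_V e.isOpen_V
  mem_U := ⟨e.mem_U, by simp only [Set.mem_preimage, e.fixes]; exact d.mem_U⟩
  mem_V := ⟨d.mem_V, by simp only [Set.mem_preimage, d.G_fixes]; exact e.mem_V⟩
  contF := d.contF.comp (e.contF.mono Set.inter_subset_left) (fun x hx => hx.2)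
  contG := e.contG.comp (d.contG.mono Set.inter_subset_left) (fun x hx => hx.2)
  mapsF := by
    rintro p ⟨hp1, hp2⟩
    refine ⟨d.mapsF hp2, ?_⟩
    simp only [Set.mem_preimage, Function.comp_apply]
    rw [d.leftInv _ hp2]
    exact e.mapsF hp1
  mapsG := by
    rintro q ⟨hq1, hq2⟩
    refine ⟨e.mapsG hq2, ?_⟩
    simp only [Set.mem_preimage, Function.comp_apply]
    rw [e.rightInv _ hq2]
    exact d.mapsG hq1
  leftInv := by
    rintro p ⟨hp1, hp2⟩
    simp only [Function.comp_apply]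
    rw [d.leftInv _ hp2, e.leftInv _ hp1]
  rightInv := by
    rintro q ⟨hq1, hq2⟩
    simp only [Function.comp_apply]
    rw [e.rightInv _ hq2, d.rightInv _ hq1]
  snd_eq := by
    rintro p ⟨hp1, hp2⟩
    simp only [Function.comp_apply]
    rw [d.snd_eq _ hp2, e.snd_eq _ hp1]
  mono := by
    rintro p ⟨hp1, hp2⟩ q ⟨hq1, hq2⟩ hpq hlt
    refine d.mono _ hp2 _ hq2 ?_ (e.mono _ hp1 _ hq1 hpq hlt)
    rw [e.snd_eq _ hp1, e.snd_eq _ hq1, hpq]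
  fixes := by simp only [Function.comp_apply, e.fixes, d.fixes]

def inv (d : ParamLocalHomeo S s₀) : ParamLocalHomeo S s₀ where
  F := d.G
  G := d.F
  U := d.V
  V := d.U
  isOpen_U := d.isOpen_V
  isOpen_V := d.isOpen_U
  mem_U := d.mem_V
  mem_V := d.mem_U
  contF := d.contG
  contG := d.contF
  mapsF := d.mapsG
  mapsG := d.mapsF
  leftInv := d.rightInv
  rightInv := d.leftInv
  snd_eq := d.G_snd_eq
  mono := by
    intro p hp q hq hpq hlt
    have hGp := d.mapsG hp
    have hGq := d.mapsG hq
    have hsnd : (d.G p).2 = (d.G q).2 := by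
      rw [d.G_snd_eq p hp, d.G_snd_eq q hq, hpq]
    rcases lt_trichotomy (d.G p).1 (d.G q).1 with h | h | h
    · exact h
    · exfalso
      have : d.G p = d.G q := Prod.ext h hsnd
      have : p = q := by rw [← d.rightInv p hp, ← d.rightInv q hq, this]
      exact absurd (congrArg Prod.fst this) (ne_of_lt hlt)
    · exfalso
      have := d.mono _ hGq _ hGp hsnd.symm h
      rw [d.rightInv p hp, d.rightInv q hq] at this
      exact absurd hlt (not_lt.mpr this.le)
  fixes := d.G_fixes

lemma comp_sound {d₁ e₁ d₂ e₂ : ParamLocalHomeo S s₀} (h₁ : d₁ ≈ e₁) (h₂ : d₂ ≈ e₂) :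
    comp d₁ d₂ ≈ comp e₁ e₂ := by
  have hc : ContinuousAt d₂.F ((0 : ℝ), s₀) :=
    d₂.contF.continuousAt (d₂.isOpen_U.mem_nhds d₂.mem_U)
  have ht : Tendsto d₂.F (nhds ((0 : ℝ), s₀)) (nhds ((0 : ℝ), s₀)) := by
    have := hc.tendsto
    rwa [d₂.fixes] at this
  exact (h₁.comp_tendsto ht).trans (h₂.fun_comp e₁.F)

lemma inv_sound {d e : ParamLocalHomeo S s₀} (h : d ≈ e) : inv d ≈ inv e := by
  obtain ⟨s, hs, hseq⟩ := Filter.eventuallyEq_iff_exists_mem.mp h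
  obtain ⟨W, hWs, hWopen, hW0⟩ := mem_nhds_iff.mp hs
  set A : Set (ℝ × S) := d.U ∩ e.U ∩ W with hA
  have hAopen : IsOpen A := (d.isOpen_U.inter e.isOpen_U).inter hWopen
  have hA0 : ((0 : ℝ), s₀) ∈ A := ⟨⟨d.mem_U, e.mem_U⟩, hW0⟩
  have hBopen : IsOpen (d.V ∩ d.G ⁻¹' A) := d.contG.isOpen_inter_preimage d.isOpen_V hAopen
  have hB0 : ((0 : ℝ), s₀) ∈ d.V ∩ d.G ⁻¹' A :=
    ⟨d.mem_V, by simp only [Set.mem_preimage, d.G_fixes]; exact hA0⟩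
  apply Filter.eventuallyEq_of_mem (hBopen.mem_nhds hB0)
  rintro q ⟨hq1, hq2⟩
  simp only [Set.mem_preimage] at hq2
  obtain ⟨⟨hxU, hxU'⟩, hxW⟩ := hq2
  show d.G q = e.G q
  have h1 : d.F (d.G q) = q := d.rightInv q hq1
  have h2 : e.F (d.G q) = q := by rw [← hseq (hWs hxW)]; exact h1
  calc d.G q = e.G (e.F (d.G q)) := (e.leftInv _ hxU').symm
    _ = e.G q := by rw [h2]

end ParamLocalHomeo

/-- The group `Homeo̰₊^{(S,s₀)}(ℝ, 0)` of germs at `(0, s₀)` of local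
homeomorphisms of `ℝ × S` of the form `(x, s) ↦ (h_s x, s)`, fixing `(0, s₀)`,
under composition of germs. -/
def ParamGermHomeoPlus : Type _ := Quotient (ParamLocalHomeo.setoid (S := S) (s₀ := s₀))

namespace ParamGermHomeoPlus

instance : Group (ParamGermHomeoPlus S s₀) where
  mul := Quotient.map₂ ParamLocalHomeo.comp
    (fun _ _ h₁ _ _ h₂ => ParamLocalHomeo.comp_sound h₁ h₂)
  one := ⟦ParamLocalHomeo.one⟧
  inv := Quotient.map ParamLocalHomeo.inv (fun _ _ h => ParamLocalHomeo.inv_sound h)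
  mul_assoc a b c := by
    induction a using Quotient.ind
    induction b using Quotient.ind
    induction c using Quotient.ind
    exact Quotient.sound (Filter.EventuallyEq.refl _ _)
  one_mul a := by
    induction a using Quotient.ind
    exact Quotient.sound (Filter.EventuallyEq.refl _ _)
  mul_one a := by
    induction a using Quotient.ind
    exact Quotient.sound (Filter.EventuallyEq.refl _ _)
  inv_mul_cancel a := by
    induction a using Quotient.ind
    rename_i d
    apply Quotient.sound
    apply Filter.eventuallyEq_of_mem (d.isOpen_U.mem_nhds d.mem_U)
    intro p hp
    exact d.leftInv p hp

end ParamGermHomeoPlus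

/-- The subspace `{0} ∪ {1/n : n ∈ ℕ, n ≥ 1}` of `ℝ`. -/
def SeqSpace : Type := {x : ℝ // x = 0 ∨ ∃ n : ℕ, 1 ≤ n ∧ x = 1 / n}

instance : TopologicalSpace SeqSpace :=
  instTopologicalSpaceSubtype

/-- The base point `0` of `SeqSpace`. -/
def SeqSpace.zero : SeqSpace := ⟨0, Or.inl rfl⟩

/-!
A nontrivial action of `G` on `ℝ` yields one by germs: place a conjugated copy of each
homeomorphism in every interval `(exp n, exp (n + 1))`, `n ∈ ℤ`, and act trivially on the
`S`-coordinate. The copies accumulate at `0`, so the germ at `(0, s₀)` still sees the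
homeomorphism.

Conversely, given a nontrivial action by germs, take an ultrafilter `𝒰` converging to `(0, s₀)`
and concentrated on points that some `g` moves. Comparing first coordinates of `g • p` along `𝒰`
is a left-invariant total preorder on `G` in which `g` and `1` differ. `G` acts by order
automorphisms on the countable quotient order `L`, hence on `L ×ₗ ℚ`, which is isomorphic to `ℚ`
by Cantor's theorem; extending by suprema turns order automorphisms of `ℚ` into those of `ℝ`.
-/

theorem MonoidHom.comp_ne_one {G H K : Type*} [Group G] [Group H] [Group K] {f : H →* K}
    (hf : Function.Injective f) {ψ : G →* H} (hψ : ψ ≠ 1) : f.comp ψ ≠ 1 := fun h =>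
  hψ ((MonoidHom.cancel_left hf).1 (h.trans (MonoidHom.comp_one f).symm))

theorem MonoidHom.exists_apply_ne_one_iff {G H : Type*} [Group G] [Group H] :
    (∃ ψ : G →* H, ∃ g, ψ g ≠ 1) ↔ ∃ ψ : G →* H, ψ ≠ 1 := by
  simp only [DFunLike.ne_iff, MonoidHom.one_apply]

theorem MulEquiv.exists_monoidHom_ne_one_iff {G H K : Type*} [Group G] [Group H] [Group K]
    (e : H ≃* K) : (∃ ψ : G →* H, ψ ≠ 1) ↔ ∃ ψ : G →* K, ψ ≠ 1 :=
  ⟨fun ⟨_, hψ⟩ => ⟨_, MonoidHom.comp_ne_one (f := e.toMonoidHom) e.injective hψ⟩,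
    fun ⟨_, hψ⟩ => ⟨_, MonoidHom.comp_ne_one (f := e.symm.toMonoidHom) e.symm.injective hψ⟩⟩

def HomeoPlusReal.orderIsoEquiv : HomeoPlusReal ≃* (ℝ ≃o ℝ) where
  toFun f := ⟨f.1, f.2.2.2.le_iff_le⟩
  invFun e := ⟨e.toEquiv, e.continuous, e.symm.continuous, e.strictMono⟩
  left_inv _ := rfl
  right_inv _ := rfl
  map_mul' _ _ := rfl

namespace OrderIso

def autCongr {α β : Type*} [Preorder α] [Preorder β] (e : α ≃o β) :
    (α ≃o α) ≃* (β ≃o β) where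
  toFun f := (e.symm.trans f).trans e
  invFun f := (e.trans f).trans e.symm
  left_inv f := by ext; simp
  right_inv f := by ext; simp
  map_mul' f g := by ext; simp [RelIso.mul_apply]

def prodLexCongrLeftHom {α : Type*} (β : Type*) [Preorder α] [Preorder β] :
    (α ≃o α) →* (α ×ₗ β ≃o α ×ₗ β) :=
  MonoidHom.mk' (fun f => Prod.Lex.prodLexCongr f (OrderIso.refl β)) fun f g => by
    ext x; rfl

theorem prodLexCongrLeftHom_injective {α : Type*} (β : Type*) [Preorder α] [Preorder β]
    [Nonempty β] : Function.Injective (prodLexCongrLeftHom (α := α) β) := by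
  intro f g hfg
  ext a
  obtain ⟨b⟩ := ‹Nonempty β›
  exact congrArg (fun h => (ofLex (h (toLex (a, b)))).1) hfg

noncomputable def mapHom {α β : Type*} [LinearOrder α] [LinearOrder β]
    (Φ : (α → α) → β → β) (hid : Φ id = id) (hcomp : ∀ f g, Φ (f ∘ g) = Φ f ∘ Φ g)
    (hmono : ∀ f, StrictMono f → StrictMono (Φ f)) : (α ≃o α) →* (β ≃o β) where
  toFun e := Equiv.toOrderIso
    { toFun := Φ e
      invFun := Φ e.symm
      left_inv := congrFun (show Φ e.symm ∘ Φ e = id by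
        rw [← hcomp, show ⇑e.symm ∘ ⇑e = id from funext e.symm_apply_apply, hid])
      right_inv := congrFun (show Φ e ∘ Φ e.symm = id by
        rw [← hcomp, show ⇑e ∘ ⇑e.symm = id from funext e.apply_symm_apply, hid]) }
    (hmono _ e.strictMono).monotone (hmono _ e.symm.strictMono).monotone
  map_one' := by ext; simp [hid]
  map_mul' e e' := by ext; simp [hcomp]

end OrderIso

section ExtendConj

variable {α β : Type*} [LinearOrder α] [LinearOrder β] {s : Set β} (σ : α ≃o s)

open scoped Classical in
noncomputable def extendConj (f : α → α) (x : β) : β :=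
  if h : x ∈ s then σ (f (σ.symm ⟨x, h⟩)) else x

theorem extendConj_apply_coe (f : α → α) (a : α) : extendConj σ f (σ a) = σ (f a) := by
  simp [extendConj]

theorem extendConj_of_notMem (f : α → α) {x : β} (hx : x ∉ s) : extendConj σ f x = x := by
  simp [extendConj, hx]

theorem extendConj_mem (f : α → α) {x : β} (hx : x ∈ s) : extendConj σ f x ∈ s := by
  simp [extendConj, hx]

theorem extendConj_comp (f g : α → α) :
    extendConj σ (f ∘ g) = extendConj σ f ∘ extendConj σ g := by
  ext x
  by_cases hx : x ∈ s
  · obtain ⟨a, rfl⟩ : ∃ a, (σ a : β) = x := ⟨σ.symm ⟨x, hx⟩, by simp⟩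
    simp [extendConj_apply_coe]
  · simp [extendConj_of_notMem σ _ hx]

theorem extendConj_id : extendConj σ id = id := by
  ext x
  by_cases hx : x ∈ s
  · obtain ⟨a, rfl⟩ : ∃ a, (σ a : β) = x := ⟨σ.symm ⟨x, hx⟩, by simp⟩
    simp [extendConj_apply_coe]
  · simp [extendConj_of_notMem σ _ hx]

theorem extendConj_strictMono (hs : s.OrdConnected) {f : α → α} (hf : StrictMono f) :
    StrictMono (extendConj σ f) := by
  intro x y hxy
  by_cases hx : x ∈ s <;> by_cases hy : y ∈ s
  · obtain ⟨a, rfl⟩ : ∃ a, (σ a : β) = x := ⟨σ.symm ⟨x, hx⟩, by simp⟩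
    obtain ⟨b, rfl⟩ : ∃ b, (σ b : β) = y := ⟨σ.symm ⟨y, hy⟩, by simp⟩
    simpa [extendConj_apply_coe] using hf (by simpa using hxy)
  · rw [extendConj_of_notMem σ f hy]
    exact lt_of_not_ge fun hyx => hy (hs.out hx (extendConj_mem σ f hx) ⟨hxy.le, hyx⟩)
  · rw [extendConj_of_notMem σ f hx]
    exact lt_of_not_ge fun hyx => hx (hs.out (extendConj_mem σ f hy) hy ⟨hyx, hxy.le⟩)
  · rwa [extendConj_of_notMem σ f hx, extendConj_of_notMem σ f hy]

end ExtendConj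

section Periodize

noncomputable def periodize (g : ℝ → ℝ) (t : ℝ) : ℝ := ⌊t⌋ + g (Int.fract t)

theorem Int.fract_mem_Ico (t : ℝ) : Int.fract t ∈ Ico (0 : ℝ) 1 :=
  ⟨Int.fract_nonneg t, Int.fract_lt_one t⟩

theorem periodize_intCast_add (g : ℝ → ℝ) (n : ℤ) {u : ℝ} (hu : u ∈ Ico (0 : ℝ) 1) :
    periodize g (n + u) = n + g u := by
  have hfloor : ⌊(n : ℝ) + u⌋ = n := by
    rw [Int.floor_intCast_add, Int.floor_eq_zero_iff.2 hu, add_zero]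
  rw [periodize, hfloor, Int.fract, hfloor, add_sub_cancel_left]

theorem periodize_id : periodize id = id := funext Int.floor_add_fract

theorem periodize_comp (f : ℝ → ℝ) {g : ℝ → ℝ} (hg : MapsTo g (Ico 0 1) (Ico 0 1)) :
    periodize (f ∘ g) = periodize f ∘ periodize g := by
  ext t
  change (⌊t⌋ : ℝ) + f (g (Int.fract t)) = periodize f (⌊t⌋ + g (Int.fract t))
  rw [periodize_intCast_add f _ (hg (Int.fract_mem_Ico t))]

theorem periodize_strictMono {g : ℝ → ℝ} (hmono : StrictMonoOn g (Ico 0 1))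
    (hg : MapsTo g (Ico 0 1) (Ico 0 1)) : StrictMono (periodize g) := by
  intro t t' htt'
  rcases (Int.floor_mono htt'.le).lt_or_eq with hlt | heq
  · have hfloor : (⌊t⌋ : ℝ) + 1 ≤ ⌊t'⌋ := by exact_mod_cast hlt
    have ht := hg (Int.fract_mem_Ico t)
    have ht' := hg (Int.fract_mem_Ico t')
    simp only [periodize, mem_Ico] at ht ht' ⊢
    linarith [ht.2, ht'.1]
  · have hfract : Int.fract t < Int.fract t' := by
      simp only [Int.fract, heq]
      linarith
    simpa only [periodize, heq, add_lt_add_iff_left] using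
      hmono (Int.fract_mem_Ico t) (Int.fract_mem_Ico t') hfract

end Periodize

section Stack

noncomputable def sigmoidOrderIso : ℝ ≃o Ioo (0 : ℝ) 1 :=
  (Real.sigmoid_strictMono.orderIso _).trans (OrderIso.setCongr _ _ Real.range_sigmoid)

noncomputable def stack (f : ℝ → ℝ) : ℝ → ℝ :=
  extendConj Real.expOrderIso (periodize (extendConj sigmoidOrderIso f))

theorem mapsTo_extendConj_sigmoidOrderIso (f : ℝ → ℝ) :
    MapsTo (extendConj sigmoidOrderIso f) (Ico 0 1) (Ico 0 1) := by
  intro u hu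
  by_cases hu' : u ∈ Ioo (0 : ℝ) 1
  · exact Ioo_subset_Ico_self (extendConj_mem _ f hu')
  · rwa [extendConj_of_notMem _ f hu']

theorem stack_comp (f g : ℝ → ℝ) : stack (f ∘ g) = stack f ∘ stack g := by
  rw [stack, extendConj_comp, periodize_comp _ (mapsTo_extendConj_sigmoidOrderIso g),
    extendConj_comp, stack, stack]

theorem stack_id : stack id = id := by
  rw [stack, extendConj_id, periodize_id, extendConj_id]

theorem stack_strictMono {f : ℝ → ℝ} (hf : StrictMono f) : StrictMono (stack f) :=
  extendConj_strictMono _ ordConnected_Ioi <| periodize_strictMono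
    ((extendConj_strictMono sigmoidOrderIso ordConnected_Ioo hf).strictMonoOn _)
    (mapsTo_extendConj_sigmoidOrderIso f)

theorem stack_zero (f : ℝ → ℝ) : stack f 0 = 0 :=
  extendConj_of_notMem _ _ (lt_irrefl (0 : ℝ))

theorem stack_exp_intCast_add_sigmoid (f : ℝ → ℝ) (n : ℤ) (a : ℝ) :
    stack f (Real.exp (n + sigmoidOrderIso a)) = Real.exp (n + sigmoidOrderIso (f a)) := by
  have hu : (sigmoidOrderIso a : ℝ) ∈ Ico (0 : ℝ) 1 := Ioo_subset_Ico_self (sigmoidOrderIso a).2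
  rw [stack, ← Real.coe_expOrderIso_apply, extendConj_apply_coe, Real.coe_expOrderIso_apply,
    periodize_intCast_add _ _ hu, extendConj_apply_coe]

theorem frequently_stack_ne {f : ℝ → ℝ} (hf : f ≠ id) : ∃ᶠ x in 𝓝 0, stack f x ≠ x := by
  obtain ⟨a, ha⟩ : ∃ a, f a ≠ a := by simpa [funext_iff] using hf
  have hmoved (n : ℕ) :
      stack f (Real.exp (-n + sigmoidOrderIso a)) ≠ Real.exp (-n + sigmoidOrderIso a) := by
    have := stack_exp_intCast_add_sigmoid f (-n) a
    push_cast at this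
    rwa [this, Ne, Real.exp_eq_exp, add_right_inj, Subtype.coe_inj,
      sigmoidOrderIso.apply_eq_iff_eq]
  have htendsto : Tendsto (fun n : ℕ => Real.exp (-n + sigmoidOrderIso a)) atTop (𝓝 0) :=
    Real.tendsto_exp_atBot.comp <| tendsto_atBot_add_const_right _ _ <|
      tendsto_neg_atTop_atBot.comp tendsto_natCast_atTop_atTop
  exact htendsto.frequently (Frequently.of_forall hmoved)

noncomputable def stackHom : (ℝ ≃o ℝ) →* (ℝ ≃o ℝ) :=
  OrderIso.mapHom stack stack_id stack_comp fun _ => stack_strictMono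

end Stack

namespace ParamLocalHomeo

variable {S : Type*} [TopologicalSpace S] {s₀ : S}

def ofOrderIso (h : ℝ ≃o ℝ) (h0 : h 0 = 0) : ParamLocalHomeo S s₀ where
  F p := (h p.1, p.2)
  G p := (h.symm p.1, p.2)
  U := univ
  V := univ
  isOpen_U := isOpen_univ
  isOpen_V := isOpen_univ
  mem_U := trivial
  mem_V := trivial
  contF := ((h.continuous.comp continuous_fst).prodMk continuous_snd).continuousOn
  contG := ((h.symm.continuous.comp continuous_fst).prodMk continuous_snd).continuousOn
  mapsF := mapsTo_univ _ _
  mapsG := mapsTo_univ _ _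
  leftInv p _ := by simp
  rightInv p _ := by simp
  snd_eq _ _ := rfl
  mono _ _ _ _ _ hlt := h.strictMono hlt
  fixes := by simp [h0]

variable (d : ParamLocalHomeo S s₀)

theorem eventually_mem_U : ∀ᶠ p in 𝓝 ((0 : ℝ), s₀), p ∈ d.U :=
  d.isOpen_U.mem_nhds d.mem_U

theorem tendsto_F : Tendsto d.F (𝓝 ((0 : ℝ), s₀)) (𝓝 ((0 : ℝ), s₀)) := by
  simpa [d.fixes] using (d.contF.continuousAt d.eventually_mem_U).tendsto

theorem fst_F_le_fst_F {p q : ℝ × S} (hp : p ∈ d.U) (hq : q ∈ d.U) (h2 : p.2 = q.2)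
    (h1 : p.1 ≤ q.1) : (d.F p).1 ≤ (d.F q).1 := by
  rcases h1.lt_or_eq with hlt | heq
  · exact (d.mono p hp q hq h2 hlt).le
  · rw [Prod.ext heq h2]

end ParamLocalHomeo

namespace ParamGermHomeoPlus

variable {S : Type*} [TopologicalSpace S] {s₀ : S}

def mk (d : ParamLocalHomeo S s₀) : ParamGermHomeoPlus S s₀ := ⟦d⟧

theorem mk_eq_mk {d e : ParamLocalHomeo S s₀} : mk d = mk e ↔ d.F =ᶠ[𝓝 ((0 : ℝ), s₀)] e.F :=
  Quotient.eq

theorem mk_mul (d e : ParamLocalHomeo S s₀) : mk d * mk e = mk (d.comp e) := rfl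

theorem mk_one : mk (ParamLocalHomeo.one (S := S) (s₀ := s₀)) = 1 := rfl

theorem mk_out (x : ParamGermHomeoPlus S s₀) : mk x.out = x :=
  Quotient.out_eq (s := ParamLocalHomeo.setoid) x

theorem out_F_eventuallyEq_iff {x y : ParamGermHomeoPlus S s₀} :
    x.out.F =ᶠ[𝓝 ((0 : ℝ), s₀)] y.out.F ↔ x = y := by
  rw [← mk_eq_mk, mk_out, mk_out]

theorem out_mul_F (x y : ParamGermHomeoPlus S s₀) :
    (x * y).out.F =ᶠ[𝓝 ((0 : ℝ), s₀)] x.out.F ∘ y.out.F :=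
  mk_eq_mk.1 (show mk (x * y).out = mk (x.out.comp y.out) by
    rw [← mk_mul, mk_out, mk_out, mk_out])

end ParamGermHomeoPlus

noncomputable def stackGermHom (S : Type*) [TopologicalSpace S] (s₀ : S) :
    (ℝ ≃o ℝ) →* ParamGermHomeoPlus S s₀ :=
  MonoidHom.mk' (fun f => .mk (.ofOrderIso (stackHom f) (stack_zero f))) fun f g => by
    rw [ParamGermHomeoPlus.mk_mul, ParamGermHomeoPlus.mk_eq_mk]
    exact .of_forall fun p => by
      simp [ParamLocalHomeo.ofOrderIso, ParamLocalHomeo.comp, RelIso.mul_apply]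

theorem stackGermHom_injective (S : Type*) [TopologicalSpace S] (s₀ : S) :
    Function.Injective (stackGermHom S s₀) := by
  refine (injective_iff_map_eq_one _).2 fun f hf => ?_
  have hgerm : (ParamLocalHomeo.ofOrderIso (stackHom f) (stack_zero f)).F
      =ᶠ[𝓝 ((0 : ℝ), s₀)] id :=
    ParamGermHomeoPlus.mk_eq_mk.1 (hf.trans ParamGermHomeoPlus.mk_one.symm)
  have hfix : ∀ᶠ x in 𝓝 (0 : ℝ), stack f x = x := by
    have htendsto : Tendsto (fun x : ℝ => (x, s₀)) (𝓝 0) (𝓝 ((0 : ℝ), s₀)) :=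
      (continuous_id.prodMk continuous_const).tendsto' _ _ rfl
    filter_upwards [hgerm.comp_tendsto htendsto] with x hx
    exact congrArg Prod.fst hx
  by_contra hne
  have hf_ne : (f : ℝ → ℝ) ≠ id := fun h => hne (RelIso.ext (congrFun h))
  obtain ⟨x, hmoved, hfixed⟩ := ((frequently_stack_ne hf_ne).and_eventually hfix).exists
  exact hmoved hfixed

section RatExtension

noncomputable def ratExt (e : ℚ ≃o ℚ) (x : ℝ) : ℝ :=
  sSup ((fun q : ℚ => (e q : ℝ)) '' {q | (q : ℝ) ≤ x})

theorem Real.eq_id_of_monotone_of_forall_rat {g : ℝ → ℝ} (hg : Monotone g)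
    (hfix : ∀ q : ℚ, g q = q) : g = id := by
  ext x
  rw [id_eq]
  by_contra hne
  rcases lt_or_gt_of_ne hne with hlt | hgt
  · obtain ⟨q, hq1, hq2⟩ := exists_rat_btwn hlt
    linarith [hfix q ▸ hg hq2.le]
  · obtain ⟨q, hq1, hq2⟩ := exists_rat_btwn hgt
    linarith [hfix q ▸ hg hq1.le]

theorem Real.orderIso_ext_rat {a b : ℝ ≃o ℝ} (h : ∀ q : ℚ, a q = b q) : a = b := by
  ext x
  have := congrFun (Real.eq_id_of_monotone_of_forall_rat (a.symm.monotone.comp b.monotone)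
    fun q => by simp [← h q]) x
  simpa [eq_comm] using congrArg a this

variable (e : ℚ ≃o ℚ)

theorem ratExt_set_nonempty (x : ℝ) :
    ((fun q : ℚ => (e q : ℝ)) '' {q | (q : ℝ) ≤ x}).Nonempty :=
  let ⟨_, hq⟩ := exists_rat_lt x
  ⟨_, mem_image_of_mem _ hq.le⟩

theorem ratExt_set_bddAbove (x : ℝ) :
    BddAbove ((fun q : ℚ => (e q : ℝ)) '' {q | (q : ℝ) ≤ x}) := by
  obtain ⟨r, hr⟩ := exists_rat_gt x
  refine ⟨e r, forall_mem_image.2 fun q hq => ?_⟩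
  exact_mod_cast e.monotone (by exact_mod_cast hq.trans hr.le)

theorem ratExt_coe (q : ℚ) : ratExt e q = e q := by
  refine IsGreatest.csSup_eq ⟨mem_image_of_mem _ (le_refl (q : ℝ)), forall_mem_image.2 ?_⟩
  intro r hr
  exact_mod_cast e.monotone (by exact_mod_cast hr)

theorem ratExt_monotone : Monotone (ratExt e) := fun _ y hxy =>
  csSup_le_csSup (ratExt_set_bddAbove e y) (ratExt_set_nonempty e _)
    (image_mono fun _ hq => hq.trans hxy)

theorem ratExt_symm_ratExt (x : ℝ) : ratExt e.symm (ratExt e x) = x :=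
  congrFun (Real.eq_id_of_monotone_of_forall_rat
    ((ratExt_monotone _).comp (ratExt_monotone _)) fun q => by simp [ratExt_coe]) x

noncomputable def ratExtOrderIso : ℝ ≃o ℝ :=
  Equiv.toOrderIso
    ⟨ratExt e, ratExt e.symm, ratExt_symm_ratExt e,
      fun x => by simpa using ratExt_symm_ratExt e.symm x⟩
    (ratExt_monotone e) (ratExt_monotone e.symm)

theorem ratExtOrderIso_apply (x : ℝ) : ratExtOrderIso e x = ratExt e x := rfl

noncomputable def ratExtHom : (ℚ ≃o ℚ) →* (ℝ ≃o ℝ) :=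
  MonoidHom.mk' ratExtOrderIso fun e e' =>
    Real.orderIso_ext_rat fun q => by simp [ratExtOrderIso_apply, ratExt_coe, RelIso.mul_apply]

theorem ratExtHom_injective : Function.Injective ratExtHom := by
  refine (injective_iff_map_eq_one _).2 fun e he => RelIso.ext fun q => ?_
  simpa [ratExtHom, ratExtOrderIso_apply, ratExt_coe] using congrArg (fun f => f q) he

end RatExtension

theorem exists_orderIso_hom_of_countable {G L : Type*} [Group G] [LinearOrder L] [Countable L]
    [Nonempty L] {ρ : G →* (L ≃o L)} (hρ : ρ ≠ 1) : ∃ ψ : G →* (ℝ ≃o ℝ), ψ ≠ 1 := by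
  have : Countable (L ×ₗ ℚ) := inferInstanceAs (Countable (L × ℚ))

  obtain ⟨e⟩ : Nonempty (L ×ₗ ℚ ≃o ℚ) := Order.iso_of_countable_dense _ _
  have hinj := (ratExtHom_injective.comp e.autCongr.injective).comp
    (OrderIso.prodLexCongrLeftHom_injective ℚ)
  exact ⟨_, MonoidHom.comp_ne_one
    (f := ratExtHom.comp (e.autCongr.toMonoidHom.comp (OrderIso.prodLexCongrLeftHom ℚ))) hinj hρ⟩

def LeftMulMonotone {G L : Type*} [Mul G] [LE L] (v : G → L) : Prop :=
  ∀ k a b, v a ≤ v b → v (k * a) ≤ v (k * b)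

namespace LeftMulMonotone

variable {G L : Type*} [Group G] [PartialOrder L] {v : G → L}

theorem map_eq (hv : LeftMulMonotone v) (k : G) {a b : G} (h : v a = v b) :
    v (k * a) = v (k * b) :=
  le_antisymm (hv k a b h.le) (hv k b a h.ge)

variable (v) in
noncomputable def rangeMap (k : G) (x : range v) : range v :=
  ⟨v (k * x.2.choose), mem_range_self _⟩

theorem rangeMap_mk (hv : LeftMulMonotone v) (k a : G) :
    rangeMap v k ⟨v a, mem_range_self a⟩ = ⟨v (k * a), mem_range_self _⟩ :=
  Subtype.ext (hv.map_eq k (mem_range_self a).choose_spec)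

noncomputable def rangeOrderIso (hv : LeftMulMonotone v) (k : G) : range v ≃o range v :=
  Equiv.toOrderIso
    { toFun := rangeMap v k
      invFun := rangeMap v k⁻¹
      left_inv := by rintro ⟨_, a, rfl⟩; simp [hv.rangeMap_mk]
      right_inv := by rintro ⟨_, a, rfl⟩; simp [hv.rangeMap_mk] }
    (by rintro ⟨_, a, rfl⟩ ⟨_, b, rfl⟩ hab; simpa [hv.rangeMap_mk] using hv k a b hab)
    (by rintro ⟨_, a, rfl⟩ ⟨_, b, rfl⟩ hab; simpa [hv.rangeMap_mk] using hv k⁻¹ a b hab)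

theorem rangeOrderIso_mk (hv : LeftMulMonotone v) (k a : G) :
    hv.rangeOrderIso k ⟨v a, mem_range_self a⟩ = ⟨v (k * a), mem_range_self _⟩ :=
  hv.rangeMap_mk k a

noncomputable def rangeAction (hv : LeftMulMonotone v) : G →* (range v ≃o range v) :=
  MonoidHom.mk' hv.rangeOrderIso fun k k' => by
    ext ⟨_, a, rfl⟩
    simp [hv.rangeOrderIso_mk, RelIso.mul_apply, mul_assoc]

theorem rangeAction_ne_one (hv : LeftMulMonotone v) {g : G} (hg : v g ≠ v 1) :
    hv.rangeAction ≠ 1 := by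
  refine DFunLike.ne_iff.2 ⟨g, fun h => hg ?_⟩
  simpa [rangeAction, hv.rangeOrderIso_mk] using
    congrArg (fun e => (e ⟨v 1, mem_range_self 1⟩ : L)) h

theorem exists_orderIso_hom {L : Type*} [LinearOrder L] [Countable G] {v : G → L}
    (hv : LeftMulMonotone v) {g : G} (hg : v g ≠ v 1) : ∃ ψ : G →* (ℝ ≃o ℝ), ψ ≠ 1 :=
  have : Nonempty (range v) := ⟨⟨v 1, mem_range_self 1⟩⟩
  have : Countable (range v) := (countable_range v).to_subtype
  exists_orderIso_hom_of_countable (hv.rangeAction_ne_one hg)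

end LeftMulMonotone

section Ultrapower

variable {G S : Type*} [Group G] [TopologicalSpace S] {s₀ : S}
  (φ : G →* ParamGermHomeoPlus S s₀) (𝒰 : Ultrafilter (ℝ × S))

noncomputable def germFst (g : G) : Germ (𝒰 : Filter (ℝ × S)) ℝ :=
  ↑(fun p => ((φ g).out.F p).1)

theorem leftMulMonotone_germFst (h𝒰 : ↑𝒰 ≤ 𝓝 ((0 : ℝ), s₀)) :
    LeftMulMonotone (germFst φ 𝒰) := by
  intro k a b hab
  have hnear (g : G) : ∀ᶠ p in 𝓝 ((0 : ℝ), s₀), p ∈ (φ g).out.U ∧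
      (φ g).out.F p ∈ (φ k).out.U ∧ (φ (k * g)).out.F p = (φ k).out.F ((φ g).out.F p) := by
    refine (φ g).out.eventually_mem_U.and (((φ g).out.tendsto_F.eventually
      (φ k).out.eventually_mem_U).and ?_)
    rw [map_mul]
    exact ParamGermHomeoPlus.out_mul_F _ _
  refine Germ.coe_le.2 ?_
  filter_upwards [Germ.coe_le.1 hab, h𝒰 (hnear a), h𝒰 (hnear b)]
    with p hp ⟨ha, hka, hkaeq⟩ ⟨hb, hkb, hkbeq⟩
  rw [hkaeq, hkbeq]
  exact (φ k).out.fst_F_le_fst_F hka hkb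
    (by rw [(φ a).out.snd_eq p ha, (φ b).out.snd_eq p hb]) hp

theorem germFst_ne {g : G}
    (h𝒰 : ↑𝒰 ≤ 𝓝 ((0 : ℝ), s₀) ⊓ 𝓟 {p | (φ g).out.F p ≠ (φ 1).out.F p}) :
    germFst φ 𝒰 g ≠ germFst φ 𝒰 1 := by
  intro heq
  have hnear : ∀ᶠ p in (𝒰 : Filter (ℝ × S)), p ∈ (φ g).out.U ∧ p ∈ (φ 1).out.U ∧
      (φ g).out.F p ≠ (φ 1).out.F p := by
    have hmem := h𝒰.trans inf_le_left
      ((φ g).out.eventually_mem_U.and (φ 1).out.eventually_mem_U)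
    have hne : ∀ᶠ p in (𝒰 : Filter (ℝ × S)), (φ g).out.F p ≠ (φ 1).out.F p :=
      h𝒰.trans inf_le_right (mem_principal_self _)
    filter_upwards [hmem, hne] with p hp hne using ⟨hp.1, hp.2, hne⟩
  obtain ⟨p, hfst, hg, h1, hne⟩ := ((Germ.coe_eq.1 heq).and hnear).exists
  exact hne (Prod.ext hfst (by rw [(φ g).out.snd_eq p hg, (φ 1).out.snd_eq p h1]))

theorem exists_leftMulMonotone_of_paramGerm {φ : G →* ParamGermHomeoPlus S s₀} (hφ : φ ≠ 1) :
    ∃ (𝒰 : Ultrafilter (ℝ × S)) (g : G), LeftMulMonotone (germFst φ 𝒰) ∧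
      germFst φ 𝒰 g ≠ germFst φ 𝒰 1 := by
  obtain ⟨g, hg⟩ : ∃ g, φ g ≠ φ 1 := by simpa [DFunLike.ne_iff] using hφ
  have hmoved : ∃ᶠ p in 𝓝 ((0 : ℝ), s₀), (φ g).out.F p ≠ (φ 1).out.F p :=
    not_eventually.1 (mt ParamGermHomeoPlus.out_F_eventuallyEq_iff.1 hg)
  have := frequently_iff_neBot.1 hmoved
  have h𝒰 := Ultrafilter.of_le (𝓝 ((0 : ℝ), s₀) ⊓ 𝓟 {p | (φ g).out.F p ≠ (φ 1).out.F p})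
  exact ⟨_, g, leftMulMonotone_germFst φ _ (h𝒰.trans inf_le_left), germFst_ne φ _ h𝒰⟩

end Ultrapower

theorem exists_orderIso_hom_ne_one_iff_paramGerm {G : Type*} [Group G] [Countable G]
    (S : Type*) [TopologicalSpace S] (s₀ : S) :
    (∃ ψ : G →* (ℝ ≃o ℝ), ψ ≠ 1) ↔ ∃ φ : G →* ParamGermHomeoPlus S s₀, φ ≠ 1 := by
  refine ⟨fun ⟨_, hψ⟩ => ⟨_, MonoidHom.comp_ne_one (stackGermHom_injective S s₀) hψ⟩,
    fun ⟨_, hφ⟩ => ?_⟩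
  obtain ⟨𝒰, g, hv, hg⟩ := exists_leftMulMonotone_of_paramGerm hφ
  exact hv.exists_orderIso_hom hg

/-- For `S = {0} ∪ {1/n : n ≥ 1}` with base point `0`, a countable group `G`
admits a homomorphism with nontrivial image into `Homeo₊(ℝ)` iff it admits a
homomorphism with nontrivial image into `Homeo̰₊^{(S,0)}(ℝ, 0)`. -/
theorem nontrivial_hom_homeoPlus_iff_paramGerm_seqSpace {G : Type*} [Group G]
    [Countable G] :
    (∃ ψ : G →* HomeoPlusReal, ∃ g : G, ψ g ≠ 1) ↔
      (∃ φ : G →* ParamGermHomeoPlus SeqSpace SeqSpace.zero, ∃ g : G, φ g ≠ 1) := by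
  rw [MonoidHom.exists_apply_ne_one_iff, MonoidHom.exists_apply_ne_one_iff,
    HomeoPlusReal.orderIsoEquiv.exists_monoidHom_ne_one_iff]
  exact exists_orderIso_hom_ne_one_iff_paramGerm SeqSpace SeqSpace.zero
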